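/- arXiv:1702.07053 — 2 statements merged into one kernel-verified Lean document; each statement's English description precedes it below -/
import Mathlib

section
/- Let d ≥ 1 and let 1 ≤ p₁ < p₂ < q < ∞. Then there exists a measurable function f on ℝ^d such that ‖f‖_{M^{p₁}_q} < ∞ and ‖f‖_{M^{p₂}_q} = ∞; that is, the inclusion M^{p₂}_q ⊆ M^{p₁}_q is proper. -/
open MeasureTheory Metric ENNReal

/-- The Morrey norm `‖f‖_{M^p_q}` of a measurable function `f : ℝ^d → ℝ`:
`sup_{a ∈ ℝ^d, r > 0} |B(a,r)|^{1/q} · ((1/|B(a,r)|) ∫_{B(a,r)} |f(y)|^p dy)^{1/p}`. -/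
noncomputable def morreyNorm (d : ℕ) (p q : ℝ)
    (f : EuclideanSpace ℝ (Fin d) → ℝ) : ℝ≥0∞ :=
  ⨆ (a : EuclideanSpace ℝ (Fin d)) (r : ℝ) (_ : 0 < r),
    volume (ball a r) ^ (1 / q) *
      ((volume (ball a r))⁻¹ *
        ∫⁻ y in ball a r, ENNReal.ofReal (|f y| ^ p)) ^ (1 / p)

/-- The weak Morrey quasi-norm `‖f‖_{wM^p_q} := sup_{γ>0} γ · ‖χ_{{x : |f x| > γ}}‖_{M^p_q}`. -/
noncomputable def weakMorreyNorm (d : ℕ) (p q : ℝ)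
    (f : EuclideanSpace ℝ (Fin d) → ℝ) : ℝ≥0∞ :=
  ⨆ (γ : ℝ) (_ : 0 < γ),
    ENNReal.ofReal γ * morreyNorm d p q (Set.indicator {x | γ < |f x|} 1)

/-!
The witness is the indicator of `E = A^d`, where `A ⊆ ℝ` is the union of the unit intervals
`[m^{1/τ}, m^{1/τ} + 1)`, `m ∈ ℕ`: a set of dimension `τ` at large scales. By concavity of
`t ↦ t^τ`, an interval of length `ℓ` meets at most `(ℓ + 1)^τ + 1` of these intervals,
while `(-ℓ, ℓ)` contains about `ℓ^τ` of them. Hence `|E ∩ B| ≲ |B|^τ` for every ball of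
radius `≥ 1` and `|E ∩ B(0,R)| ≳ |B(0,R)|^τ`, so the Morrey term
`|B|^{1/q} (|E ∩ B| / |B|)^{1/p}` of such a ball is comparable to `|B|^{1/q - (1-τ)/p}`,
while small balls contribute at most `|B(0,1)|^{1/q}`. For `1 - p₂/q < τ < 1 - p₁/q` this
exponent is negative for `p = p₁` and positive for `p = p₂`.
-/

open Set Filter Topology Function

lemma Real.rpow_sub_rpow_le_rpow_sub {a b τ : ℝ} (hb : 0 ≤ b) (hba : b ≤ a) (hτ0 : 0 ≤ τ)
    (hτ1 : τ ≤ 1) : a ^ τ - b ^ τ ≤ (a - b) ^ τ := by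
  have := Real.rpow_add_le_add_rpow hb (sub_nonneg.2 hba) hτ0 hτ1
  rw [add_sub_cancel] at this
  linarith

def sparseInterval (τ : ℝ) (m : ℕ) : Set ℝ :=
  Ico ((m : ℝ) ^ τ⁻¹) ((m : ℝ) ^ τ⁻¹ + 1)

def sparseSet (τ : ℝ) : Set ℝ := ⋃ m, sparseInterval τ m

section SparseSet

variable {τ : ℝ}

lemma measurableSet_sparseSet : MeasurableSet (sparseSet τ) :=
  .iUnion fun _ => measurableSet_Ico

lemma volume_sparseInterval (m : ℕ) : volume (sparseInterval τ m) = 1 := by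
  simp [sparseInterval, Real.volume_Ico]

lemma natCast_sub_le_rpow_inv_sub (hτ0 : 0 < τ) (hτ1 : τ ≤ 1) {m n : ℕ} (h : m ≤ n) :
    (n : ℝ) - m ≤ ((n : ℝ) ^ τ⁻¹ - (m : ℝ) ^ τ⁻¹) ^ τ := by
  have hmn : (m : ℝ) ^ τ⁻¹ ≤ (n : ℝ) ^ τ⁻¹ := by gcongr
  calc (n : ℝ) - m = ((n : ℝ) ^ τ⁻¹) ^ τ - ((m : ℝ) ^ τ⁻¹) ^ τ := by
        rw [Real.rpow_inv_rpow (by positivity) hτ0.ne',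
          Real.rpow_inv_rpow (by positivity) hτ0.ne']
    _ ≤ _ := Real.rpow_sub_rpow_le_rpow_sub (by positivity) hmn hτ0.le hτ1

lemma rpow_inv_add_one_le (hτ0 : 0 < τ) (hτ1 : τ ≤ 1) {m n : ℕ} (h : m < n) :
    (m : ℝ) ^ τ⁻¹ + 1 ≤ (n : ℝ) ^ τ⁻¹ := by
  have hgap : (1 : ℝ) ≤ ((n : ℝ) ^ τ⁻¹ - (m : ℝ) ^ τ⁻¹) ^ τ :=
    le_trans (by rw [le_sub_iff_add_le']; exact_mod_cast h)
      (natCast_sub_le_rpow_inv_sub hτ0 hτ1 h.le)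
  by_contra! hlt
  have hnn : 0 ≤ (n : ℝ) ^ τ⁻¹ - (m : ℝ) ^ τ⁻¹ := sub_nonneg.2 (by gcongr)
  exact (Real.rpow_lt_one hnn (by linarith) hτ0).not_ge hgap

lemma pairwise_disjoint_sparseInterval (hτ0 : 0 < τ) (hτ1 : τ ≤ 1) :
    Pairwise (Disjoint on (sparseInterval τ)) :=
  (pairwise_disjoint_on _).2 fun _ _ hmn => Ico_disjoint_Ico_same.mono_right
    (Ico_subset_Ico_left (rpow_inv_add_one_le hτ0 hτ1 hmn))

lemma volume_sparseSet_inter_Ioo_le (hτ0 : 0 < τ) (hτ1 : τ ≤ 1) {u v : ℝ} (huv : u ≤ v) :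
    volume (sparseSet τ ∩ Ioo u v) ≤ ENNReal.ofReal ((v - u + 1) ^ τ + 1) := by
  by_cases hS : ∃ m : ℕ, u - 1 < (m : ℝ) ^ τ⁻¹ ∧ (m : ℝ) ^ τ⁻¹ < v
  swap
  · suffices sparseSet τ ∩ Ioo u v = ∅ by simp [this]
    refine eq_empty_of_forall_notMem fun x ⟨hx, hxI⟩ => ?_
    obtain ⟨m, hm⟩ := mem_iUnion.1 hx
    exact hS ⟨m, by linarith [hm.2, hxI.1], by linarith [hm.1, hxI.2]⟩
  set m₀ := Nat.find hS
  set K := ⌊(v - u + 1) ^ τ⌋₊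
  -- by concavity of `t ↦ t ^ τ`, the indices of the intervals meeting `(u, v)` span at most `K`
  have hcover : sparseSet τ ∩ Ioo u v ⊆
      ⋃ m ∈ Finset.Icc m₀ (m₀ + K), sparseInterval τ m := by
    rintro x ⟨hx, hxI⟩
    obtain ⟨m, hm⟩ := mem_iUnion.1 hx
    have hmS : u - 1 < (m : ℝ) ^ τ⁻¹ ∧ (m : ℝ) ^ τ⁻¹ < v :=
      ⟨by linarith [hm.2, hxI.1], by linarith [hm.1, hxI.2]⟩
    have hle : m₀ ≤ m := Nat.find_min' hS hmS
    have hdist : (m : ℝ) - m₀ ≤ (v - u + 1) ^ τ := by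
      refine (natCast_sub_le_rpow_inv_sub hτ0 hτ1 hle).trans (Real.rpow_le_rpow ?_ ?_ hτ0.le)
      · exact sub_nonneg.2 (by gcongr)
      · linarith [(Nat.find_spec hS).1]
    have hK : m - m₀ ≤ K := Nat.le_floor (by push_cast [hle]; exact hdist)
    exact mem_biUnion (Finset.mem_Icc.2 ⟨hle, by omega⟩) hm
  calc volume (sparseSet τ ∩ Ioo u v)
      ≤ ∑ m ∈ Finset.Icc m₀ (m₀ + K), volume (sparseInterval τ m) :=
        (measure_mono hcover).trans (measure_biUnion_finset_le _ _)
    _ = K + 1 := by simp [volume_sparseInterval, show m₀ + K + 1 - m₀ = K + 1 by omega]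
    _ ≤ ENNReal.ofReal ((v - u + 1) ^ τ + 1) := by
        rw [← ENNReal.ofReal_natCast, ← ENNReal.ofReal_one,
          ← ENNReal.ofReal_add (by positivity) zero_le_one]
        exact ENNReal.ofReal_le_ofReal (by gcongr; exact Nat.floor_le (by positivity))

lemma volume_sparseSet_inter_Ioo_le_four_mul_rpow (hτ0 : 0 < τ) (hτ1 : τ ≤ 1) (c : ℝ)
    {r : ℝ} (hr : 1 ≤ r) :
    volume (sparseSet τ ∩ Ioo (c - r) (c + r)) ≤ ENNReal.ofReal (4 * r ^ τ) := by
  refine (volume_sparseSet_inter_Ioo_le hτ0 hτ1 (by linarith)).trans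
    (ENNReal.ofReal_le_ofReal ?_)
  have h1 : 1 ≤ r ^ τ := Real.one_le_rpow hr hτ0.le
  have h3 : (3 : ℝ) ^ τ ≤ 3 := by
    simpa using Real.rpow_le_rpow_of_exponent_le (by norm_num : (1 : ℝ) ≤ 3) hτ1
  calc (c + r - (c - r) + 1) ^ τ + 1 ≤ (3 * r) ^ τ + r ^ τ := by gcongr <;> linarith
    _ = 3 ^ τ * r ^ τ + r ^ τ := by rw [Real.mul_rpow (by norm_num) (by linarith)]
    _ ≤ 4 * r ^ τ := by nlinarith

lemma le_volume_sparseSet_inter_Ioo (hτ0 : 0 < τ) (hτ1 : τ ≤ 1) {L : ℝ} (hL : 1 ≤ L) :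
    ENNReal.ofReal ((L - 1) ^ τ) ≤ volume (sparseSet τ ∩ Ioo (-L) L) := by
  set M := ⌊(L - 1) ^ τ⌋₊
  have hsub : ⋃ m ∈ Finset.range (M + 1), sparseInterval τ m ⊆
      sparseSet τ ∩ Ioo (-L) L := by
    refine iUnion₂_subset fun m hm x hx => ⟨mem_iUnion.2 ⟨m, hx⟩, ?_, ?_⟩
    · linarith [hx.1, show 0 ≤ (m : ℝ) ^ τ⁻¹ by positivity]
    · have hmM : (m : ℝ) ≤ (L - 1) ^ τ :=
        (Nat.cast_le.2 (Nat.lt_succ_iff.1 (Finset.mem_range.1 hm))).trans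
          (Nat.floor_le (by positivity))
      have : (m : ℝ) ^ τ⁻¹ ≤ L - 1 :=
        calc (m : ℝ) ^ τ⁻¹ ≤ ((L - 1) ^ τ) ^ τ⁻¹ := by gcongr
          _ = L - 1 := Real.rpow_rpow_inv (by linarith) hτ0.ne'
      linarith [hx.2]
  calc ENNReal.ofReal ((L - 1) ^ τ) ≤ (M + 1 : ℕ) := by
        rw [← ENNReal.ofReal_natCast]
        exact ENNReal.ofReal_le_ofReal (by push_cast; exact (Nat.lt_floor_add_one _).le)
    _ = ∑ m ∈ Finset.range (M + 1), volume (sparseInterval τ m) := by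
        simp [volume_sparseInterval]
    _ = volume (⋃ m ∈ Finset.range (M + 1), sparseInterval τ m) :=
        (measure_biUnion_finset ((pairwise_disjoint_sparseInterval hτ0 hτ1).set_pairwise _)
          fun _ _ => measurableSet_Ico).symm
    _ ≤ volume (sparseSet τ ∩ Ioo (-L) L) := measure_mono hsub

end SparseSet

section Euclidean

variable {ι : Type*} [Fintype ι]

lemma ball_subset_ofLp_preimage_pi (a : EuclideanSpace ℝ ι) (r : ℝ) :
    ball a r ⊆ WithLp.ofLp ⁻¹' univ.pi fun i => Ioo (a i - r) (a i + r) := fun x hx i _ => by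
  show x i ∈ Ioo (a i - r) (a i + r)
  rw [← Real.ball_eq_Ioo]
  exact (PiLp.dist_apply_le x a i).trans_lt hx

lemma ofLp_preimage_pi_subset_ball [Nonempty ι] (ρ : ℝ) :
    (WithLp.ofLp ⁻¹' univ.pi fun _ => Ioo (-ρ) ρ : Set (EuclideanSpace ℝ ι)) ⊆
      ball 0 (√(Fintype.card ι) * ρ) := by
  intro x hx
  have hx' : ∀ i, x i ∈ Ioo (-ρ) ρ := fun i => hx i trivial
  have hρ : 0 ≤ ρ := by obtain ⟨h₁, h₂⟩ := hx' (Classical.arbitrary ι); linarith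
  have hsum : ∑ i, ‖x i‖ ^ 2 < Fintype.card ι * ρ ^ 2 := by
    simpa using Finset.sum_lt_sum_of_nonempty Finset.univ_nonempty fun i _ =>
      sq_lt_sq' (hx' i).1 (hx' i).2
  rw [mem_ball_zero_iff, EuclideanSpace.norm_eq, ← Real.sqrt_sq hρ,
    ← Real.sqrt_mul (by positivity)]
  exact Real.sqrt_lt_sqrt (by positivity) hsum

end Euclidean

def sparseSetPi (ι : Type*) (τ : ℝ) : Set (EuclideanSpace ℝ ι) :=
  WithLp.ofLp ⁻¹' univ.pi fun _ => sparseSet τ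

section SparseSetPi

variable {ι : Type*} [Fintype ι] {τ : ℝ}

lemma measurableSet_sparseSetPi : MeasurableSet (sparseSetPi ι τ) :=
  (MeasurableSet.univ_pi fun _ => measurableSet_sparseSet).preimage (by fun_prop)

lemma volume_sparseSetPi_inter_ofLp_preimage_pi (T : ι → Set ℝ)
    (hT : ∀ i, MeasurableSet (T i)) :
    volume (sparseSetPi ι τ ∩ WithLp.ofLp ⁻¹' univ.pi T) =
      ∏ i, volume (sparseSet τ ∩ T i) := by
  rw [sparseSetPi, ← preimage_inter, ← pi_inter_distrib,
    (PiLp.volume_preserving_ofLp ι).measure_preimage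
      (MeasurableSet.univ_pi fun i => measurableSet_sparseSet.inter (hT i)).nullMeasurableSet,
    volume_pi_pi]

lemma ofReal_pow_rpow_eq_volume_ball {r s : ℝ} (hr : 0 < r) (hs : 0 < s)
    (x : EuclideanSpace ℝ ι) :
    ENNReal.ofReal (r ^ Fintype.card ι) ^ τ =
      (volume (ball (0 : EuclideanSpace ℝ ι) s) ^ τ)⁻¹ * volume (ball x (r * s)) ^ τ := by
  have hpos : 0 < volume (ball (0 : EuclideanSpace ℝ ι) s) := measure_ball_pos _ _ hs
  have h0 := (ENNReal.rpow_pos hpos measure_ball_lt_top.ne (p := τ)).ne'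
  have htop := ENNReal.rpow_ne_top_of_nonneg' hpos measure_ball_lt_top.ne (y := τ)
  rw [Measure.addHaar_ball_mul_of_pos _ _ hr, finrank_euclideanSpace,
    ENNReal.mul_rpow_of_ne_top ofReal_ne_top measure_ball_lt_top.ne, mul_left_comm,
    ENNReal.inv_mul_cancel h0 htop, mul_one]

lemma exists_volume_sparseSetPi_inter_ball_le (hτ0 : 0 < τ) (hτ1 : τ ≤ 1) :
    ∃ C ≠ ⊤, ∀ (a : EuclideanSpace ℝ ι) (r : ℝ), 1 ≤ r →
      volume (sparseSetPi ι τ ∩ ball a r) ≤ C * volume (ball a r) ^ τ := by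
  have hω := measure_ball_pos volume (0 : EuclideanSpace ℝ ι) one_pos
  refine ⟨4 ^ Fintype.card ι * (volume (ball (0 : EuclideanSpace ℝ ι) 1) ^ τ)⁻¹,
    ENNReal.mul_ne_top (ENNReal.pow_ne_top ENNReal.ofNat_ne_top)
      (ENNReal.inv_ne_top.2 (ENNReal.rpow_pos hω measure_ball_lt_top.ne).ne'),
    fun a r hr => ?_⟩
  calc volume (sparseSetPi ι τ ∩ ball a r)
      ≤ volume (sparseSetPi ι τ ∩
          WithLp.ofLp ⁻¹' univ.pi fun i => Ioo (a i - r) (a i + r)) :=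
        measure_mono (inter_subset_inter_right _ (ball_subset_ofLp_preimage_pi a r))
    _ = ∏ i, volume (sparseSet τ ∩ Ioo (a i - r) (a i + r)) :=
        volume_sparseSetPi_inter_ofLp_preimage_pi _ fun _ => measurableSet_Ioo
    _ ≤ ∏ _i : ι, ENNReal.ofReal (4 * r ^ τ) :=
        Finset.prod_le_prod' fun i _ => volume_sparseSet_inter_Ioo_le_four_mul_rpow hτ0 hτ1 _ hr
    _ = 4 ^ Fintype.card ι * ENNReal.ofReal (r ^ Fintype.card ι) ^ τ := by
        rw [Finset.prod_const, Finset.card_univ, ENNReal.ofReal_mul (by norm_num), mul_pow,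
          ENNReal.ofReal_ofNat, ← ENNReal.ofReal_pow (by positivity),
          Real.rpow_pow_comm (by linarith), ENNReal.ofReal_rpow_of_nonneg (by positivity) hτ0.le]
    _ = _ := by rw [ofReal_pow_rpow_eq_volume_ball (by linarith) one_pos a, mul_one, mul_assoc]

lemma exists_le_volume_sparseSetPi_inter_ball [Nonempty ι] (hτ0 : 0 < τ) (hτ1 : τ ≤ 1) :
    ∃ c ≠ 0, ∀ᶠ R in atTop,
      c * volume (ball (0 : EuclideanSpace ℝ ι) R) ^ τ ≤
        volume (sparseSetPi ι τ ∩ ball 0 R) := by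
  refine ⟨(volume (ball (0 : EuclideanSpace ℝ ι) (2 * √(Fintype.card ι))) ^ τ)⁻¹,
    ENNReal.inv_ne_zero.2 (ENNReal.rpow_ne_top_of_nonneg hτ0.le measure_ball_lt_top.ne), ?_⟩
  filter_upwards [eventually_ge_atTop (2 * √(Fintype.card ι))] with R hR
  have hn : 0 < √(Fintype.card ι) := Real.sqrt_pos.2 (by exact_mod_cast Fintype.card_pos)
  set ρ := R / √(Fintype.card ι)
  have hρ : 2 ≤ ρ := (le_div_iff₀ hn).2 (by linarith)
  have hρR : √(Fintype.card ι) * ρ = R := mul_div_cancel₀ _ hn.ne'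
  have hfac : ENNReal.ofReal ((ρ / 2) ^ τ) ≤ volume (sparseSet τ ∩ Ioo (-ρ) ρ) :=
    (ENNReal.ofReal_le_ofReal (by gcongr; linarith)).trans
      (le_volume_sparseSet_inter_Ioo hτ0 hτ1 (by linarith))
  calc (volume (ball (0 : EuclideanSpace ℝ ι) (2 * √(Fintype.card ι))) ^ τ)⁻¹ *
        volume (ball (0 : EuclideanSpace ℝ ι) R) ^ τ
      = ENNReal.ofReal ((ρ / 2) ^ Fintype.card ι) ^ τ := by
        have hscale : ρ / 2 * (2 * √(Fintype.card ι)) = R := by rw [← hρR]; ring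
        rw [ofReal_pow_rpow_eq_volume_ball (s := 2 * √(Fintype.card ι)) (by positivity)
          (by positivity) 0, hscale]
    _ = ∏ _i : ι, ENNReal.ofReal ((ρ / 2) ^ τ) := by
        rw [Finset.prod_const, Finset.card_univ, ← ENNReal.ofReal_pow (by positivity),
          Real.rpow_pow_comm (by positivity),
          ENNReal.ofReal_rpow_of_nonneg (by positivity) hτ0.le]
    _ ≤ ∏ _i : ι, volume (sparseSet τ ∩ Ioo (-ρ) ρ) :=
        Finset.prod_le_prod' fun _ _ => hfac
    _ = volume (sparseSetPi ι τ ∩ WithLp.ofLp ⁻¹' univ.pi fun _ => Ioo (-ρ) ρ) :=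
        (volume_sparseSetPi_inter_ofLp_preimage_pi _ fun _ => measurableSet_Ioo).symm
    _ ≤ volume (sparseSetPi ι τ ∩ ball 0 R) :=
        measure_mono (inter_subset_inter_right _ (hρR ▸ ofLp_preimage_pi_subset_ball ρ))

end SparseSetPi

lemma lintegral_ofReal_abs_indicator_one_rpow {X : Type*} [MeasurableSpace X] (μ : Measure X)
    {E : Set X} (hE : MeasurableSet E) {p : ℝ} (hp : 0 < p) (B : Set X) :
    ∫⁻ y in B, ENNReal.ofReal (|E.indicator 1 y| ^ p) ∂μ = μ (E ∩ B) := by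
  have h : (fun y => ENNReal.ofReal (|E.indicator (1 : X → ℝ) y| ^ p)) = E.indicator 1 := by
    funext y
    by_cases hy : y ∈ E <;> simp [hy, hp.ne']
  rw [h, lintegral_indicator_one hE, Measure.restrict_apply hE]

lemma rpow_mul_inv_mul_mul_rpow {V C : ℝ≥0∞} (hV0 : V ≠ 0) (hVt : V ≠ ⊤) {p q τ : ℝ}
    (hp : 0 < p) :
    V ^ (1 / q) * (V⁻¹ * (C * V ^ τ)) ^ (1 / p) = C ^ (1 / p) * V ^ (1 / q - (1 - τ) / p) := by
  rw [mul_left_comm, ← ENNReal.rpow_neg_one, ← ENNReal.rpow_add _ _ hV0 hVt,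
    ENNReal.mul_rpow_of_nonneg _ _ (by positivity), ← ENNReal.rpow_mul, mul_left_comm,
    ← ENNReal.rpow_add _ _ hV0 hVt]
  congr 2
  ring

lemma rpow_mul_inv_mul_rpow_le {V I : ℝ≥0∞} (hV0 : V ≠ 0) (hVt : V ≠ ⊤) (hIV : I ≤ V)
    {p q : ℝ} (hp : 0 < p) : V ^ (1 / q) * (V⁻¹ * I) ^ (1 / p) ≤ V ^ (1 / q) := by
  have hI : V⁻¹ * I ≤ 1 := (ENNReal.inv_mul_le_iff hV0 hVt).2 (by rwa [mul_one])
  calc V ^ (1 / q) * (V⁻¹ * I) ^ (1 / p) ≤ V ^ (1 / q) * 1 := by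
        gcongr; exact ENNReal.rpow_le_one hI (by positivity)
    _ = V ^ (1 / q) := mul_one _

lemma ENNReal.rpow_le_rpow_of_nonpos {x y : ℝ≥0∞} {z : ℝ} (hxy : x ≤ y) (hz : z ≤ 0) :
    y ^ z ≤ x ^ z := by
  rw [← neg_neg z, ENNReal.rpow_neg y, ENNReal.rpow_neg x]
  exact ENNReal.inv_le_inv.2 (ENNReal.rpow_le_rpow hxy (neg_nonneg.2 hz))

lemma tendsto_volume_ball_zero_atTop {ι : Type*} [Fintype ι] [Nonempty ι] :
    Tendsto (fun R => volume (ball (0 : EuclideanSpace ℝ ι) R)) atTop (𝓝 ⊤) := by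
  have hω0 : volume (ball (0 : EuclideanSpace ℝ ι) 1) ≠ 0 :=
    (measure_ball_pos _ _ one_pos).ne'
  have h := ENNReal.Tendsto.mul_const (b := volume (ball (0 : EuclideanSpace ℝ ι) 1))
    (ENNReal.tendsto_ofReal_atTop.comp (tendsto_pow_atTop (Fintype.card_ne_zero (α := ι))))
    (Or.inl top_ne_zero)
  rw [top_mul hω0] at h
  refine h.congr' ?_
  filter_upwards [eventually_gt_atTop 0] with R hR
  rw [Function.comp_apply, Measure.addHaar_ball_of_pos _ _ hR, finrank_euclideanSpace]

section IndicatorMorreyNorm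

variable {d : ℕ} {p q τ : ℝ} {E : Set (EuclideanSpace ℝ (Fin d))}

lemma morreyNorm_indicator (hE : MeasurableSet E) (hp : 0 < p) :
    morreyNorm d p q (E.indicator 1) =
      ⨆ (a : EuclideanSpace ℝ (Fin d)) (r : ℝ) (_ : 0 < r), volume (ball a r) ^ (1 / q) *
        ((volume (ball a r))⁻¹ * volume (E ∩ ball a r)) ^ (1 / p) := by
  simp_rw [morreyNorm, lintegral_ofReal_abs_indicator_one_rpow volume hE hp]

theorem morreyNorm_indicator_lt_top {C : ℝ≥0∞} (hE : MeasurableSet E) (hp : 0 < p)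
    (hq : 0 < q) (hτ : τ < 1 - p / q) (hC : C ≠ ⊤)
    (hdens : ∀ a r, 1 ≤ r → volume (E ∩ ball a r) ≤ C * volume (ball a r) ^ τ) :
    morreyNorm d p q (E.indicator 1) < ⊤ := by
  set ω := volume (ball (0 : EuclideanSpace ℝ (Fin d)) 1)
  have hω0 : ω ≠ 0 := (measure_ball_pos _ _ one_pos).ne'
  have hωt : ω ≠ ⊤ := measure_ball_lt_top.ne
  have hω : ∀ a, volume (ball a 1) = ω := fun a => Measure.addHaar_ball_center volume a 1
  have hκ : 1 / q - (1 - τ) / p < 0 := by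
    have := div_lt_div_of_pos_right (lt_sub_comm.1 hτ) hp
    rwa [div_div_cancel_left' hp.ne', ← one_div, ← sub_neg] at this
  have hbound : ∀ a r, 0 < r → volume (ball a r) ^ (1 / q) *
      ((volume (ball a r))⁻¹ * volume (E ∩ ball a r)) ^ (1 / p) ≤
        ω ^ (1 / q) + C ^ (1 / p) * ω ^ (1 / q - (1 - τ) / p) := by
    intro a r hr
    have hV0 : volume (ball a r) ≠ 0 := (measure_ball_pos _ _ hr).ne'
    have hVt : volume (ball a r) ≠ ⊤ := measure_ball_lt_top.ne
    rcases le_total r 1 with hr1 | hr1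
    · refine le_add_right ((rpow_mul_inv_mul_rpow_le hV0 hVt
        (measure_mono inter_subset_right) hp).trans ?_)
      rw [← hω a]
      gcongr
    · refine le_add_left ?_
      calc _ ≤ volume (ball a r) ^ (1 / q) *
            ((volume (ball a r))⁻¹ * (C * volume (ball a r) ^ τ)) ^ (1 / p) := by
            gcongr; exact hdens a r hr1
        _ = C ^ (1 / p) * volume (ball a r) ^ (1 / q - (1 - τ) / p) :=
            rpow_mul_inv_mul_mul_rpow hV0 hVt hp
        _ ≤ C ^ (1 / p) * ω ^ (1 / q - (1 - τ) / p) := by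
            have hωV : ω ≤ volume (ball a r) := hω a ▸ measure_mono (ball_subset_ball hr1)
            exact mul_le_mul_right (ENNReal.rpow_le_rpow_of_nonpos hωV hκ.le) _
  rw [morreyNorm_indicator hE hp]
  refine (iSup₂_le fun a r => iSup_le (hbound a r)).trans_lt ?_
  exact ENNReal.add_lt_top.2 ⟨ENNReal.rpow_lt_top_of_nonneg (by positivity) hωt,
    ENNReal.mul_lt_top (ENNReal.rpow_lt_top_of_nonneg (by positivity) hC)
      (ENNReal.rpow_ne_top_of_nonneg' (pos_iff_ne_zero.2 hω0) hωt).lt_top⟩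

theorem morreyNorm_indicator_eq_top [NeZero d] {c : ℝ≥0∞} (hE : MeasurableSet E) (hp : 0 < p)
    (hτ : 1 - p / q < τ) (hc : c ≠ 0)
    (hdens : ∀ᶠ R in atTop,
      c * volume (ball (0 : EuclideanSpace ℝ (Fin d)) R) ^ τ ≤ volume (E ∩ ball 0 R)) :
    morreyNorm d p q (E.indicator 1) = ⊤ := by
  have hκ : 0 < 1 / q - (1 - τ) / p := by
    have := div_lt_div_of_pos_right (sub_lt_comm.1 hτ) hp
    rw [div_div_cancel_left' hp.ne', ← one_div] at this
    exact sub_pos.2 this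
  have hterm : Tendsto (fun R => c ^ (1 / p) *
      volume (ball (0 : EuclideanSpace ℝ (Fin d)) R) ^ (1 / q - (1 - τ) / p))
      atTop (𝓝 ⊤) := by
    have h := ((ENNReal.continuous_rpow_const (y := 1 / q - (1 - τ) / p)).tendsto ⊤).comp
      (tendsto_volume_ball_zero_atTop (ι := Fin d))
    rw [ENNReal.top_rpow_of_pos hκ] at h
    have h' := ENNReal.Tendsto.const_mul h (Or.inl top_ne_zero) (a := c ^ (1 / p))
    rwa [ENNReal.mul_top (ENNReal.rpow_pos_of_nonneg (pos_iff_ne_zero.2 hc) (by positivity)).ne']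
      at h'
  refine top_unique (le_of_tendsto hterm ?_)
  filter_upwards [hdens, eventually_gt_atTop 0] with R hR hR0
  set B := ball (0 : EuclideanSpace ℝ (Fin d)) R
  have hV0 : volume B ≠ 0 := (measure_ball_pos _ _ hR0).ne'
  calc c ^ (1 / p) * volume B ^ (1 / q - (1 - τ) / p)
      = volume B ^ (1 / q) * ((volume B)⁻¹ * (c * volume B ^ τ)) ^ (1 / p) :=
        (rpow_mul_inv_mul_mul_rpow hV0 measure_ball_lt_top.ne hp).symm
    _ ≤ volume B ^ (1 / q) * ((volume B)⁻¹ * volume (E ∩ B)) ^ (1 / p) :=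
        mul_le_mul_right (ENNReal.rpow_le_rpow (mul_le_mul_right hR _) (by positivity)) _
    _ ≤ morreyNorm d p q (E.indicator 1) := by
        rw [morreyNorm_indicator hE hp]
        exact le_iSup₂_of_le (0 : EuclideanSpace ℝ (Fin d)) R (le_iSup_of_le hR0 le_rfl)

end IndicatorMorreyNorm

/-- If `1 ≤ p₁ < p₂ < q < ∞`, the inclusion `M^{p₂}_q ⊆ M^{p₁}_q` is proper: there is
a measurable `f` with `‖f‖_{M^{p₁}_q} < ∞` and `‖f‖_{M^{p₂}_q} = ∞`. -/
theorem morrey_inclusion_proper (d : ℕ) (hd : 1 ≤ d) (p₁ p₂ q : ℝ)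
    (hp₁ : 1 ≤ p₁) (hp₁₂ : p₁ < p₂) (hp₂q : p₂ < q) :
    ∃ f : EuclideanSpace ℝ (Fin d) → ℝ, Measurable f ∧
      morreyNorm d p₁ q f < ⊤ ∧ morreyNorm d p₂ q f = ⊤ := by
  have : NeZero d := ⟨by omega⟩
  have hq : 0 < q := by linarith
  set τ := 1 - (p₁ + p₂) / (2 * q)
  have hτ₁ : τ < 1 - p₁ / q := by
    rw [sub_lt_sub_iff_left, div_lt_div_iff₀ hq (by positivity)]; nlinarith
  have hτ₂ : 1 - p₂ / q < τ := by
    rw [sub_lt_sub_iff_left, div_lt_div_iff₀ (by positivity) hq]; nlinarith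
  have hτ0 : 0 < τ := by
    rw [sub_pos, div_lt_one (by positivity)]; linarith
  have hτ1 : τ ≤ 1 := sub_le_self _ (div_nonneg (by linarith) (by linarith))
  obtain ⟨C, hC, hupper⟩ := exists_volume_sparseSetPi_inter_ball_le (ι := Fin d) hτ0 hτ1
  obtain ⟨c, hc, hlower⟩ := exists_le_volume_sparseSetPi_inter_ball (ι := Fin d) hτ0 hτ1
  exact ⟨_, measurable_const.indicator measurableSet_sparseSetPi,
    morreyNorm_indicator_lt_top measurableSet_sparseSetPi (by linarith) hq hτ₁ hC hupper,
    morreyNorm_indicator_eq_top measurableSet_sparseSetPi (by linarith) hτ₂ hc hlower⟩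
end

section
/- Let d ≥ 1 and 1 ≤ p < q < ∞. Suppose f : ℝ^d → (0,∞) is a positive radial decreasing function (i.e., f(x) = g(|x|) for some nonincreasing g : [0,∞) → (0,∞)) with ‖f‖_{wM^p_q} < ∞. Then ‖f‖_{M^p_q} < ∞ and ‖f‖_{wM^p_q} ≤ ‖f‖_{M^p_q} ≤ ( q·ω_{d-1} / ( d·(q-p)·|B(0,1)| ) )^{1/p} · ‖f‖_{wM^p_q}, where ω_{d-1} is the surface area of the unit sphere S^{d-1} ⊂ ℝ^d and |B(0,1)| is the Lebesgue measure of the unit ball. -/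
open MeasureTheory Metric ENNReal

/-!
The superlevel sets `{|f| > t}` of a radially decreasing `|f|` lie between a ball `B(0,R)` and its
closure, and testing the weak Morrey norm on `B(0,R)` itself gives `t^q |{|f| > t}| ≤ ‖f‖_{wM}^q`,
so `f` is in weak `L^q`. On a ball `B` with `|B| = v`, the layer-cake formula cut at height
`T = ‖f‖_{wM} v^{-1/q}` gives
`∫_B |f|^p ≤ v T^p + p/(q-p) ‖f‖_{wM}^q T^{p-q} = q/(q-p) ‖f‖_{wM}^p v^{1-p/q}`,
which is the upper bound. The lower bound is Chebyshev's inequality on each ball, and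
`ω_{d-1} = d |B(0,1)|` matches the constants.
-/

section WeakType

variable {α : Type*} [MeasurableSpace α]

theorem lintegral_Ioc_rpow_sub_one {p : ℝ} (hp : 0 < p) {T : ℝ} (hT : 0 ≤ T) :
    ∫⁻ t in Set.Ioc 0 T, ENNReal.ofReal (t ^ (p - 1)) = ENNReal.ofReal (T ^ p / p) := by
  have hint : IntervalIntegrable (fun t : ℝ => t ^ (p - 1)) volume 0 T :=
    intervalIntegral.intervalIntegrable_rpow' (by linarith)
  have hnn : 0 ≤ᵐ[volume.restrict (Set.Ioc (0 : ℝ) T)] fun t : ℝ => t ^ (p - 1) := by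
    filter_upwards [ae_restrict_mem measurableSet_Ioc] with t ht
    exact Real.rpow_nonneg ht.1.le _
  rw [← ofReal_integral_eq_lintegral_ofReal hint.1 hnn, ← intervalIntegral.integral_of_le hT,
    integral_rpow (Or.inl (by linarith)), sub_add_cancel, Real.zero_rpow hp.ne', sub_zero]

theorem lintegral_Ioi_rpow {s : ℝ} (hs : s < -1) {T : ℝ} (hT : 0 < T) :
    ∫⁻ t in Set.Ioi T, ENNReal.ofReal (t ^ s) = ENNReal.ofReal (-T ^ (s + 1) / (s + 1)) := by
  have hnn : 0 ≤ᵐ[volume.restrict (Set.Ioi T)] fun t : ℝ => t ^ s := by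
    filter_upwards [ae_restrict_mem measurableSet_Ioi] with t ht
    exact Real.rpow_nonneg (hT.trans ht).le _
  rw [← ofReal_integral_eq_lintegral_ofReal (integrableOn_Ioi_rpow_of_lt hs hT) hnn,
    integral_Ioi_rpow_of_lt hs hT]

theorem lintegral_rpow_le_of_weakType_split (ν : Measure α) {f : α → ℝ} (hf : AEMeasurable f ν)
    {p q : ℝ} (hp : 0 < p) (hpq : p < q) {C : ℝ≥0∞}
    (hweak : ∀ t : ℝ, 0 < t → ENNReal.ofReal t ^ q * ν {x | t < |f x|} ≤ C ^ q)
    {T : ℝ} (hT : 0 < T) :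
    ∫⁻ x, ENNReal.ofReal (|f x| ^ p) ∂ν ≤
      ν Set.univ * ENNReal.ofReal T ^ p +
        ENNReal.ofReal (p / (q - p)) * C ^ q * ENNReal.ofReal T ^ (p - q) := by
  have hsmall : ∫⁻ t in Set.Ioc 0 T, ν {x | t < |f x|} * ENNReal.ofReal (t ^ (p - 1))
      ≤ ν Set.univ * ENNReal.ofReal (T ^ p / p) :=
    calc _ ≤ ∫⁻ t in Set.Ioc 0 T, ν Set.univ * ENNReal.ofReal (t ^ (p - 1)) :=
          lintegral_mono fun t => mul_le_mul_left (measure_mono (Set.subset_univ _)) _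
      _ = _ := by rw [lintegral_const_mul _ (by fun_prop), lintegral_Ioc_rpow_sub_one hp hT.le]
  have hlarge : ∫⁻ t in Set.Ioi T, ν {x | t < |f x|} * ENNReal.ofReal (t ^ (p - 1))
      ≤ C ^ q * ENNReal.ofReal (T ^ (p - q) / (q - p)) := by
    calc _ ≤ ∫⁻ t in Set.Ioi T, C ^ q * ENNReal.ofReal (t ^ (p - 1 - q)) := by
          refine setLIntegral_mono' measurableSet_Ioi fun t ht => ?_
          have ht0 : 0 < t := hT.trans ht
          have hsplit : ENNReal.ofReal (t ^ (p - 1)) =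
              ENNReal.ofReal t ^ q * ENNReal.ofReal (t ^ (p - 1 - q)) := by
            rw [ENNReal.ofReal_rpow_of_pos ht0, ← ENNReal.ofReal_mul (by positivity),
              ← Real.rpow_add ht0, add_sub_cancel]
          rw [hsplit, ← mul_assoc, mul_comm (ν _)]
          exact mul_le_mul_left (hweak t ht0) _
      _ = _ := by
          rw [lintegral_const_mul _ (by fun_prop), lintegral_Ioi_rpow (by linarith) hT,
            show p - 1 - q + 1 = p - q by ring, neg_div, ← div_neg, neg_sub]
  have e1 : ENNReal.ofReal p * ENNReal.ofReal (T ^ p / p) = ENNReal.ofReal T ^ p := by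
    rw [← ENNReal.ofReal_mul hp.le, mul_div_cancel₀ _ hp.ne', ENNReal.ofReal_rpow_of_pos hT]
  have e2 : ENNReal.ofReal p * ENNReal.ofReal (T ^ (p - q) / (q - p)) =
      ENNReal.ofReal (p / (q - p)) * ENNReal.ofReal T ^ (p - q) := by
    rw [ENNReal.ofReal_rpow_of_pos hT, ← ENNReal.ofReal_mul hp.le, ← ENNReal.ofReal_mul
      (div_nonneg hp.le (by linarith)), mul_div_assoc', div_mul_eq_mul_div]
  rw [lintegral_rpow_eq_lintegral_meas_lt_mul ν (ae_of_all _ fun x => abs_nonneg (f x)) hf.abs hp,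
    ← Set.Ioc_union_Ioi_eq_Ioi hT.le,
    lintegral_union measurableSet_Ioi (Set.Ioc_disjoint_Ioi le_rfl)]
  calc _ ≤ ENNReal.ofReal p * (ν Set.univ * ENNReal.ofReal (T ^ p / p) +
          C ^ q * ENNReal.ofReal (T ^ (p - q) / (q - p))) := by gcongr
    _ = ν Set.univ * (ENNReal.ofReal p * ENNReal.ofReal (T ^ p / p)) +
          C ^ q * (ENNReal.ofReal p * ENNReal.ofReal (T ^ (p - q) / (q - p))) := by ring
    _ = _ := by rw [e1, e2]; ring

theorem mul_rpow_add_rpow_eq_of_optimal_split {v C : ℝ≥0∞} (hv0 : v ≠ 0) (hv : v ≠ ⊤)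
    (hC0 : C ≠ 0) (hC : C ≠ ⊤) {p q : ℝ} (hp : 0 ≤ p) (hpq : p < q) (hq : q ≠ 0) :
    v * (C * v ^ (-(1 / q))) ^ p +
        ENNReal.ofReal (p / (q - p)) * C ^ q * (C * v ^ (-(1 / q))) ^ (p - q) =
      ENNReal.ofReal (q / (q - p)) * C ^ p * v ^ (1 - p / q) := by
  have hpow : ∀ z : ℝ, (C * v ^ (-(1 / q))) ^ z = C ^ z * v ^ (-(z / q)) := fun z => by
    rw [ENNReal.mul_rpow_of_ne_top hC (by simp [ENNReal.rpow_eq_top_iff, hv0, hv]),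
      ← ENNReal.rpow_mul]
    ring_nf
  have h1 : v * (C ^ p * v ^ (-(p / q))) = C ^ p * v ^ (1 - p / q) := by
    rw [sub_eq_add_neg, ENNReal.rpow_add _ _ hv0 hv, ENNReal.rpow_one]
    ring
  have h2 : C ^ q * (C ^ (p - q) * v ^ (-((p - q) / q))) = C ^ p * v ^ (1 - p / q) := by
    rw [← mul_assoc, ← ENNReal.rpow_add _ _ hC0 hC, add_sub_cancel,
      show -((p - q) / q) = 1 - p / q by field_simp; ring]
  have hsum : 1 + ENNReal.ofReal (p / (q - p)) = ENNReal.ofReal (q / (q - p)) := by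
    have : q - p ≠ 0 := by linarith
    rw [← ENNReal.ofReal_one, ← ENNReal.ofReal_add zero_le_one (div_nonneg hp (by linarith))]
    congr 1
    field_simp
    ring
  rw [hpow, hpow, h1, mul_assoc _ (C ^ q), h2, ← hsum]
  ring

theorem lintegral_rpow_le_of_weakType (ν : Measure α) [IsFiniteMeasure ν] {f : α → ℝ}
    (hf : AEMeasurable f ν) {p q : ℝ} (hp : 0 < p) (hpq : p < q) {C : ℝ≥0∞} (hC : C ≠ ⊤)
    (hweak : ∀ t : ℝ, 0 < t → ENNReal.ofReal t ^ q * ν {x | t < |f x|} ≤ C ^ q) :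
    ∫⁻ x, ENNReal.ofReal (|f x| ^ p) ∂ν ≤
      ENNReal.ofReal (q / (q - p)) * C ^ p * ν Set.univ ^ (1 - p / q) := by
  have hq : 0 < q := hp.trans hpq
  rcases eq_or_ne (ν Set.univ) 0 with hν0 | hν0
  · simp [Measure.measure_univ_eq_zero.mp hν0]
  rcases eq_or_ne C 0 with rfl | hC0
  · have hnull : ∀ t : ℝ, 0 < t → ν {x | t < |f x|} = 0 := fun t ht => by
      simpa [ENNReal.zero_rpow_of_pos hq, not_le.mpr ht] using hweak t ht
    rw [lintegral_rpow_eq_lintegral_meas_lt_mul ν (ae_of_all _ fun x => abs_nonneg (f x)) hf.abs hp,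
      setLIntegral_congr_fun measurableSet_Ioi (g := 0) fun t ht => by simp [hnull t ht]]
    simp
  -- The two halves of the layer-cake bound balance at this height.
  set T := (C * ν Set.univ ^ (-(1 / q))).toReal
  have hT_ne_top : C * ν Set.univ ^ (-(1 / q)) ≠ ⊤ :=
    ENNReal.mul_ne_top hC (by simp [ENNReal.rpow_eq_top_iff, hν0])
  have hT : 0 < T := ENNReal.toReal_pos
    (mul_ne_zero hC0 (by simp [ENNReal.rpow_eq_zero_iff, hν0])) hT_ne_top
  calc _ ≤ _ := lintegral_rpow_le_of_weakType_split ν hf hp hpq hweak hT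
    _ = _ := by
      rw [ENNReal.ofReal_toReal hT_ne_top,
        mul_rpow_add_rpow_eq_of_optimal_split hν0 (measure_ne_top ν _) hC0 hC hp.le hpq hq.ne']

end WeakType

section MorreyTerm

variable {α : Type*} [MeasurableSpace α]

noncomputable def morreyTerm (μ : Measure α) (p q : ℝ) (f : α → ℝ) (B : Set α) : ℝ≥0∞ :=
  μ B ^ (1 / q) * ((μ B)⁻¹ * ∫⁻ y in B, ENNReal.ofReal (|f y| ^ p) ∂μ) ^ (1 / p)

theorem morreyTerm_le_of_weakType (μ : Measure α) {B : Set α} (hB0 : μ B ≠ 0) (hB : μ B ≠ ⊤)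
    {f : α → ℝ} (hf : AEMeasurable f (μ.restrict B)) {p q : ℝ} (hp : 0 < p) (hpq : p < q)
    {C : ℝ≥0∞} (hC : C ≠ ⊤)
    (hweak : ∀ t : ℝ, 0 < t → ENNReal.ofReal t ^ q * μ {x | t < |f x|} ≤ C ^ q) :
    morreyTerm μ p q f B ≤ ENNReal.ofReal (q / (q - p)) ^ (1 / p) * C := by
  have := isFiniteMeasure_restrict.mpr hB
  have hint := lintegral_rpow_le_of_weakType (μ.restrict B) hf hp hpq hC fun t ht =>
    (mul_le_mul_right (Measure.restrict_apply_le B _) _).trans (hweak t ht)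
  rw [Measure.restrict_apply_univ] at hint
  have hinv : (μ B)⁻¹ * (ENNReal.ofReal (q / (q - p)) * C ^ p * μ B ^ (1 - p / q)) =
      ENNReal.ofReal (q / (q - p)) * C ^ p * μ B ^ (-(p / q)) := by
    rw [← ENNReal.rpow_neg_one, mul_left_comm, ← ENNReal.rpow_add _ _ hB0 hB]
    ring_nf
  calc morreyTerm μ p q f B ≤ μ B ^ (1 / q) *
        ((μ B)⁻¹ * (ENNReal.ofReal (q / (q - p)) * C ^ p * μ B ^ (1 - p / q))) ^ (1 / p) := by
        unfold morreyTerm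
        gcongr
    _ = ENNReal.ofReal (q / (q - p)) ^ (1 / p) * C * (μ B ^ (1 / q) * μ B ^ (-(1 / q))) := by
        rw [hinv, ENNReal.mul_rpow_of_nonneg _ _ (by positivity),
          ENNReal.mul_rpow_of_nonneg _ _ (by positivity), ← ENNReal.rpow_mul, ← ENNReal.rpow_mul,
          mul_one_div_cancel hp.ne', ENNReal.rpow_one, neg_mul, div_mul_div_comm, mul_one,
          mul_comm q p, ← div_div, div_self hp.ne']
        ring
    _ = _ := by rw [← ENNReal.rpow_add _ _ hB0 hB, add_neg_cancel, ENNReal.rpow_zero, mul_one]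

theorem ofReal_mul_morreyTerm_indicator_le (μ : Measure α) (B : Set α) {p q : ℝ} (hp : 0 < p)
    {f : α → ℝ} {γ : ℝ} (hγ : 0 < γ) :
    ENNReal.ofReal γ * morreyTerm μ p q (Set.indicator {x | γ < |f x|} 1) B ≤
      morreyTerm μ p q f B := by
  have hpt : ∀ y, ENNReal.ofReal γ ^ p *
      ENNReal.ofReal (|Set.indicator {x | γ < |f x|} (1 : α → ℝ) y| ^ p) ≤
        ENNReal.ofReal (|f y| ^ p) := fun y => by
    by_cases hy : y ∈ {x | γ < |f x|}
    · rw [Set.indicator_of_mem hy, Pi.one_apply, abs_one, Real.one_rpow, ENNReal.ofReal_one,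
        mul_one, ENNReal.ofReal_rpow_of_pos hγ]
      exact ENNReal.ofReal_le_ofReal (Real.rpow_le_rpow hγ.le (le_of_lt hy) hp.le)
    · rw [Set.indicator_of_notMem hy, abs_zero, Real.zero_rpow hp.ne', ENNReal.ofReal_zero,
        mul_zero]
      exact zero_le
  have hγp : ENNReal.ofReal γ = (ENNReal.ofReal γ ^ p) ^ (1 / p) := by
    rw [← ENNReal.rpow_mul, mul_one_div_cancel hp.ne', ENNReal.rpow_one]
  calc _ = μ B ^ (1 / q) * ((μ B)⁻¹ * (ENNReal.ofReal γ ^ p *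
        ∫⁻ y in B, ENNReal.ofReal (|Set.indicator {x | γ < |f x|} (1 : α → ℝ) y| ^ p) ∂μ)) ^
          (1 / p) := by
        rw [mul_left_comm (μ B)⁻¹, ENNReal.mul_rpow_of_nonneg (ENNReal.ofReal γ ^ p) _
          (by positivity : (0 : ℝ) ≤ 1 / p), ← hγp, morreyTerm]
        ring
    _ ≤ _ := by
        unfold morreyTerm
        gcongr
        exact (lintegral_const_mul_le _ _).trans (lintegral_mono hpt)

theorem morreyTerm_indicator_of_subset (μ : Measure α) {S B : Set α} (hSB : B ⊆ S)
    (hB : MeasurableSet B) (hB0 : μ B ≠ 0) (hBt : μ B ≠ ⊤) (p q : ℝ) :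
    morreyTerm μ p q (S.indicator 1) B = μ B ^ (1 / q) := by
  have hone : Set.EqOn (fun y => ENNReal.ofReal (|S.indicator (1 : α → ℝ) y| ^ p)) 1 B :=
    fun y hy => by simp [Set.indicator_of_mem (hSB hy)]
  rw [morreyTerm, setLIntegral_congr_fun hB hone, Pi.one_def, setLIntegral_const, one_mul,
    ENNReal.inv_mul_cancel hB0 hBt, ENNReal.one_rpow, mul_one]

end MorreyTerm

theorem measure_le_iSup_measure_ball_subset {E : Type*} [NormedAddCommGroup E] [NormedSpace ℝ E]
    [MeasurableSpace E] [BorelSpace E] [FiniteDimensional ℝ E] [Nontrivial E] (μ : Measure E)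
    [μ.IsAddHaarMeasure] {S : Set E} (hS : ∀ x ∈ S, ∀ y, ‖y‖ ≤ ‖x‖ → y ∈ S) :
    μ S ≤ ⨆ (R : ℝ) (_ : ball (0 : E) R ⊆ S), μ (ball 0 R) := by
  rcases S.eq_empty_or_nonempty with rfl | hne
  · simp
  by_cases hbdd : BddAbove (norm '' S)
  · set R := sSup (norm '' S)
    have hball : ball 0 R ⊆ S := fun x hx => by
      obtain ⟨_, ⟨y, hy, rfl⟩, hxy⟩ :=
        exists_lt_of_lt_csSup (hne.image _) (mem_ball_zero_iff.mp hx)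
      exact hS y hy x hxy.le
    calc μ S ≤ μ (closedBall 0 R) := measure_mono fun x hx =>
          mem_closedBall_zero_iff.mpr (le_csSup hbdd (Set.mem_image_of_mem _ hx))
      _ = μ (ball 0 R) := Measure.addHaar_closedBall_eq_addHaar_ball μ 0 R
      _ ≤ _ := le_iSup₂ (f := fun R (_ : ball (0 : E) R ⊆ S) => μ (ball 0 R)) R hball
  · have huniv : S = Set.univ := Set.eq_univ_of_forall fun x => by
      obtain ⟨_, ⟨y, hy, rfl⟩, hxy⟩ := not_bddAbove_iff.mp hbdd ‖x‖
      exact hS y hy x hxy.le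
    rw [huniv, ← iUnion_ball_nat, Monotone.measure_iUnion fun m n hmn =>
      ball_subset_ball (by exact_mod_cast hmn)]
    exact iSup_le fun n => le_iSup₂
      (f := fun R (_ : ball (0 : E) R ⊆ ⋃ n : ℕ, ball 0 (n : ℝ)) => μ (ball 0 R)) (n : ℝ)
      (Set.subset_iUnion (fun n : ℕ => ball (0 : E) n) n)

theorem AntitoneOn.measurable_comp_norm {E : Type*} [NormedAddCommGroup E] [MeasurableSpace E]
    [OpensMeasurableSpace E] {g : ℝ → ℝ} (hg : AntitoneOn g (Set.Ici 0)) :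
    Measurable fun x : E => g ‖x‖ := by
  have hanti : Antitone fun t => g (max t 0) := fun s t hst =>
    hg (le_max_right s 0) (le_max_right t 0) (max_le_max hst le_rfl)
  simpa only [Function.comp_def, max_eq_left (norm_nonneg _)] using
    hanti.measurable.comp (measurable_norm (α := E))

section Morrey

variable {d : ℕ} {p q : ℝ} {f : EuclideanSpace ℝ (Fin d) → ℝ}

theorem morreyNorm_eq_iSup_morreyTerm : morreyNorm d p q f =
    ⨆ (a : EuclideanSpace ℝ (Fin d)) (r : ℝ) (_ : 0 < r), morreyTerm volume p q f (ball a r) :=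
  rfl

theorem morreyTerm_le_morreyNorm (a : EuclideanSpace ℝ (Fin d)) {r : ℝ} (hr : 0 < r) :
    morreyTerm volume p q f (ball a r) ≤ morreyNorm d p q f :=
  le_iSup₂_of_le a r (le_iSup (fun _ : 0 < r => morreyTerm volume p q f (ball a r)) hr)

theorem ofReal_mul_morreyNorm_le_weakMorreyNorm {γ : ℝ} (hγ : 0 < γ) :
    ENNReal.ofReal γ * morreyNorm d p q (Set.indicator {x | γ < |f x|} 1) ≤
      weakMorreyNorm d p q f :=
  le_iSup₂ (f := fun γ (_ : 0 < γ) =>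
    ENNReal.ofReal γ * morreyNorm d p q (Set.indicator {x | γ < |f x|} 1)) γ hγ

theorem weakMorreyNorm_le_morreyNorm (hp : 0 < p) :
    weakMorreyNorm d p q f ≤ morreyNorm d p q f := by
  refine iSup₂_le fun γ hγ => ?_
  simp only [morreyNorm_eq_iSup_morreyTerm, ENNReal.mul_iSup]
  exact iSup₂_mono fun a r => iSup_mono fun _ =>
    ofReal_mul_morreyTerm_indicator_le volume (ball a r) hp hγ

theorem morreyNorm_le_of_weakType (hp : 0 < p) (hpq : p < q) (hf : AEMeasurable f)
    {C : ℝ≥0∞} (hC : C ≠ ⊤)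
    (hweak : ∀ t : ℝ, 0 < t → ENNReal.ofReal t ^ q * volume {x | t < |f x|} ≤ C ^ q) :
    morreyNorm d p q f ≤ ENNReal.ofReal (q / (q - p)) ^ (1 / p) * C :=
  iSup₂_le fun a _ => iSup_le fun hr => morreyTerm_le_of_weakType volume
    (measure_ball_pos volume a hr).ne' measure_ball_lt_top.ne hf.restrict hp hpq hC hweak

theorem ofReal_rpow_mul_volume_ball_le_weakMorreyNorm_rpow (hq : 0 < q) {t : ℝ} (ht : 0 < t)
    {a : EuclideanSpace ℝ (Fin d)} {r : ℝ} (hr : 0 < r) (hsub : ball a r ⊆ {x | t < |f x|}) :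
    ENNReal.ofReal t ^ q * volume (ball a r) ≤ weakMorreyNorm d p q f ^ q := by
  have hball : ENNReal.ofReal t * volume (ball a r) ^ (1 / q) ≤ weakMorreyNorm d p q f :=
    calc _ = ENNReal.ofReal t *
          morreyTerm volume p q (Set.indicator {x | t < |f x|} 1) (ball a r) := by
          rw [morreyTerm_indicator_of_subset volume hsub measurableSet_ball
            (measure_ball_pos volume a hr).ne' measure_ball_lt_top.ne]
      _ ≤ ENNReal.ofReal t * morreyNorm d p q (Set.indicator {x | t < |f x|} 1) := by
          gcongr
          exact morreyTerm_le_morreyNorm a hr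
      _ ≤ _ := ofReal_mul_morreyNorm_le_weakMorreyNorm ht
  calc _ = (ENNReal.ofReal t * volume (ball a r) ^ (1 / q)) ^ q := by
        rw [ENNReal.mul_rpow_of_nonneg _ _ hq.le, ← ENNReal.rpow_mul, one_div_mul_cancel hq.ne',
          ENNReal.rpow_one]
    _ ≤ _ := ENNReal.rpow_le_rpow hball hq.le

theorem ofReal_rpow_mul_volume_le_weakMorreyNorm_rpow [NeZero d] (hq : 0 < q)
    (hf : ∀ x y, ‖y‖ ≤ ‖x‖ → |f x| ≤ |f y|) {t : ℝ} (ht : 0 < t) :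
    ENNReal.ofReal t ^ q * volume {x | t < |f x|} ≤ weakMorreyNorm d p q f ^ q := by
  calc _ ≤ ENNReal.ofReal t ^ q * ⨆ (R : ℝ) (_ : ball 0 R ⊆ {x | t < |f x|}),
        volume (ball (0 : EuclideanSpace ℝ (Fin d)) R) := by
        gcongr
        exact measure_le_iSup_measure_ball_subset volume fun x hx y hy =>
          lt_of_lt_of_le hx (hf x y hy)
    _ ≤ _ := by
        simp only [ENNReal.mul_iSup]
        refine iSup₂_le fun R hR => ?_
        rcases le_or_gt R 0 with hR0 | hR0
        · simp [ball_eq_empty.mpr hR0]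
        · exact ofReal_rpow_mul_volume_ball_le_weakMorreyNorm_rpow hq ht hR0 hR

end Morrey

theorem ofReal_mul_toSphere_univ_div {E : Type*} [NormedAddCommGroup E] [NormedSpace ℝ E]
    [MeasurableSpace E] [BorelSpace E] [FiniteDimensional ℝ E] [Nontrivial E] (μ : Measure E)
    [μ.IsAddHaarMeasure] (a : ℝ) {b : ℝ} (hb : 0 < b) :
    ENNReal.ofReal a * μ.toSphere Set.univ /
        ((Module.finrank ℝ E : ℝ≥0∞) * ENNReal.ofReal b * μ (ball 0 1)) =
      ENNReal.ofReal (a / b) := by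
  have hV0 : (Module.finrank ℝ E : ℝ≥0∞) * μ (ball 0 1) ≠ 0 :=
    mul_ne_zero (by simp [Module.finrank_pos.ne']) (measure_ball_pos μ 0 one_pos).ne'
  have hV : (Module.finrank ℝ E : ℝ≥0∞) * μ (ball 0 1) ≠ ⊤ :=
    ENNReal.mul_ne_top (ENNReal.natCast_ne_top _) measure_ball_lt_top.ne
  rw [Measure.toSphere_apply_univ, ENNReal.ofReal_div_of_pos hb, mul_comm (ENNReal.ofReal a),
    mul_right_comm _ (ENNReal.ofReal b), ENNReal.mul_div_mul_left _ _ hV0 hV]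

theorem radial_decreasing_weakMorrey_eq_morrey_general (d : ℕ) (hd : 1 ≤ d) (p q : ℝ)
    (hp : 1 ≤ p) (hpq : p < q)
    (f : EuclideanSpace ℝ (Fin d) → ℝ) (hpos : ∀ x, 0 < f x)
    (g : ℝ → ℝ)
    (hradial : ∀ x, f x = g ‖x‖) (hdecr : AntitoneOn g (Set.Ici 0))
    (hfw : weakMorreyNorm d p q f < ⊤) :
    morreyNorm d p q f < ⊤ ∧
      weakMorreyNorm d p q f ≤ morreyNorm d p q f ∧
      morreyNorm d p q f ≤
        (ENNReal.ofReal q *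
            (volume : Measure (EuclideanSpace ℝ (Fin d))).toSphere Set.univ /
          ((d : ℝ≥0∞) * ENNReal.ofReal (q - p) *
            volume (ball (0 : EuclideanSpace ℝ (Fin d)) 1))) ^ (1 / p) *
          weakMorreyNorm d p q f := by
  have hp0 : 0 < p := zero_lt_one.trans_le hp
  have : NeZero d := ⟨by omega⟩
  have hf : Measurable f := (funext hradial : f = _) ▸ hdecr.measurable_comp_norm
  have hmono : ∀ x y, ‖y‖ ≤ ‖x‖ → |f x| ≤ |f y| := fun x y hxy => by
    rw [abs_of_pos (hpos x), abs_of_pos (hpos y), hradial, hradial]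
    exact hdecr (norm_nonneg y) (norm_nonneg x) hxy
  have hstrong := morreyNorm_le_of_weakType hp0 hpq hf.aemeasurable hfw.ne fun t ht =>
    ofReal_rpow_mul_volume_le_weakMorreyNorm_rpow (hp0.trans hpq) hmono ht
  have hconst := ofReal_mul_toSphere_univ_div
    (volume : Measure (EuclideanSpace ℝ (Fin d))) q (sub_pos.mpr hpq)
  rw [finrank_euclideanSpace_fin] at hconst
  refine ⟨hstrong.trans_lt (ENNReal.mul_lt_top ?_ hfw), weakMorreyNorm_le_morreyNorm hp0, ?_⟩
  · exact (ENNReal.rpow_ne_top_of_nonneg (by positivity) ENNReal.ofReal_ne_top).lt_top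
  · rwa [hconst]

/-- A positive radial decreasing function in `wM^p_q` (`1 ≤ p < q < ∞`) lies in
`M^p_q`, with `‖f‖_{wM^p_q} ≤ ‖f‖_{M^p_q} ≤ (q ω_{d-1} / (d (q-p) |B(0,1)|))^{1/p} ‖f‖_{wM^p_q}`,
where `ω_{d-1}` is the surface area of the unit sphere. -/
theorem radial_decreasing_weakMorrey_eq_morrey (d : ℕ) (hd : 1 ≤ d) (p q : ℝ)
    (hp : 1 ≤ p) (hpq : p < q)
    (f : EuclideanSpace ℝ (Fin d) → ℝ) (hpos : ∀ x, 0 < f x)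
    (g : ℝ → ℝ) (hgpos : ∀ t ∈ Set.Ici (0 : ℝ), 0 < g t)
    (hradial : ∀ x, f x = g ‖x‖) (hdecr : AntitoneOn g (Set.Ici 0))
    (hfw : weakMorreyNorm d p q f < ⊤) :
    morreyNorm d p q f < ⊤ ∧
      weakMorreyNorm d p q f ≤ morreyNorm d p q f ∧
      morreyNorm d p q f ≤
        (ENNReal.ofReal q *
            (volume : Measure (EuclideanSpace ℝ (Fin d))).toSphere Set.univ /
          ((d : ℝ≥0∞) * ENNReal.ofReal (q - p) *
            volume (ball (0 : EuclideanSpace ℝ (Fin d)) 1))) ^ (1 / p) *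
          weakMorreyNorm d p q f :=
  radial_decreasing_weakMorrey_eq_morrey_general d hd p q hp hpq f hpos g hradial hdecr hfw
end
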